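/- arXiv:2411.00817 — 2 statements merged into one kernel-verified Lean document; each statement's English description precedes it below -/
import Mathlib

section
/- Let n ≥ 2, let Ω, Ω̃ ⊆ ℝⁿ be bounded, uniformly convex open domains with smooth boundary with defining functions h̃ and h respectively, and suppose the closure of Ω̃ is contained in the open unit ball B₁(0). Let (u, c) be a strictly convex solution of the second boundary value problem for the Lorentz mean curvature operator on (Ω, Ω̃). Then for every x ∈ ∂Ω, ⟨∇h(∇u(x)), ∇h̃(x)⟩ ≥ 0; that is, the boundary condition is oblique: the inner product of the inner unit normal ν(x) = ∇h̃(x) of Ω with the vector β(x) = ∇h(∇u(x)) is nonnegative. -/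
noncomputable section
open MeasureTheory
open scoped RealInnerProductSpace

/-- The `i`-th standard basis vector of `ℝⁿ`. -/
def ev (n : ℕ) (i : Fin n) : EuclideanSpace ℝ (Fin n) := EuclideanSpace.single i 1

/-- Lorentz mean curvature operator `M[u] x = ∑ i, ∂ᵢ (∂ᵢ u / √(1 - |∇u|²)) x`. -/
def MOp (n : ℕ) (u : EuclideanSpace ℝ (Fin n) → ℝ) (x : EuclideanSpace ℝ (Fin n)) : ℝ :=
  ∑ i : Fin n,
    fderiv ℝ (fun y => fderiv ℝ u y (ev n i) / Real.sqrt (1 - ‖gradient u y‖ ^ 2)) x (ev n i)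

/-- Euclidean mean curvature operator `E[u] x = ∑ i, ∂ᵢ (∂ᵢ u / √(1 + |∇u|²)) x`. -/
def EOp (n : ℕ) (u : EuclideanSpace ℝ (Fin n) → ℝ) (x : EuclideanSpace ℝ (Fin n)) : ℝ :=
  ∑ i : Fin n,
    fderiv ℝ (fun y => fderiv ℝ u y (ev n i) / Real.sqrt (1 + ‖gradient u y‖ ^ 2)) x (ev n i)

/-- `Ω` is a uniformly convex domain with smooth boundary, exhibited by the defining
function `h` with uniform concavity constant `θ`:  `h` is smooth, `Ω = {h > 0}`,
`|∇h| = 1` on `∂Ω`, and `⟨ξ, D²h(p) ξ⟩ ≤ -θ |ξ|²` for all `p, ξ`. -/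
def IsUnifConvexDefFn (n : ℕ) (Ω : Set (EuclideanSpace ℝ (Fin n)))
    (h : EuclideanSpace ℝ (Fin n) → ℝ) (θ : ℝ) : Prop :=
  ContDiff ℝ (⊤ : ℕ∞) h ∧ Ω = {p | 0 < h p} ∧
  (∀ p ∈ frontier Ω, ‖gradient h p‖ = 1) ∧ 0 < θ ∧
  ∀ p ξ : EuclideanSpace ℝ (Fin n), ⟪ξ, fderiv ℝ (gradient h) p ξ⟫ ≤ -θ * ‖ξ‖ ^ 2

/-- `u` is smooth on the closure of `Ω` (i.e. on an open neighbourhood of it). -/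
def SmoothOnClosure (n : ℕ) (Ω : Set (EuclideanSpace ℝ (Fin n)))
    (u : EuclideanSpace ℝ (Fin n) → ℝ) : Prop :=
  ∃ U : Set (EuclideanSpace ℝ (Fin n)), IsOpen U ∧ closure Ω ⊆ U ∧ ContDiffOn ℝ (⊤ : ℕ∞) u U

/-- `(u, c)` is a strictly convex solution of the second boundary value problem for the
Lorentz mean curvature operator on `(Ω, Ω')`: `u` is smooth up to the boundary, spacelike
(`|∇u| < 1`), has positive definite Hessian `D²u` on the closure of `Ω`, its gradient map
is a bijection from `Ω` onto `Ω'`, and `M[u] = c` on `Ω`. -/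
def IsSol (n : ℕ) (Ω Ω' : Set (EuclideanSpace ℝ (Fin n)))
    (u : EuclideanSpace ℝ (Fin n) → ℝ) (c : ℝ) : Prop :=
  SmoothOnClosure n Ω u ∧
  (∀ x ∈ closure Ω, ‖gradient u x‖ < 1) ∧
  (∀ x ∈ closure Ω, ∀ ξ : EuclideanSpace ℝ (Fin n), ξ ≠ 0 →
      0 < ⟪ξ, fderiv ℝ (gradient u) x ξ⟫) ∧
  Set.BijOn (gradient u) Ω Ω' ∧
  (∀ x ∈ Ω, MOp n u x = c)

/-- `(u, c)` is a strictly convex solution of the second boundary value problem for the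
Euclidean mean curvature operator on `(Ω, Ω')`. -/
def IsSolE (n : ℕ) (Ω Ω' : Set (EuclideanSpace ℝ (Fin n)))
    (u : EuclideanSpace ℝ (Fin n) → ℝ) (c : ℝ) : Prop :=
  SmoothOnClosure n Ω u ∧
  (∀ x ∈ closure Ω, ∀ ξ : EuclideanSpace ℝ (Fin n), ξ ≠ 0 →
      0 < ⟪ξ, fderiv ℝ (gradient u) x ξ⟫) ∧
  Set.BijOn (gradient u) Ω Ω' ∧
  (∀ x ∈ Ω, EOp n u x = c)

/-- `ut` is the Legendre transform of `u`: it is smooth up to the boundary of `Ω'`,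
satisfies `ut (∇u x) = ⟨x, ∇u x⟩ - u x` and `∇ut (∇u x) = x` for `x ∈ Ω`. -/
def IsLegendre (n : ℕ) (Ω Ω' : Set (EuclideanSpace ℝ (Fin n)))
    (u ut : EuclideanSpace ℝ (Fin n) → ℝ) : Prop :=
  SmoothOnClosure n Ω' ut ∧
  (∀ x ∈ Ω, ut (gradient u x) = ⟪x, gradient u x⟫ - u x) ∧
  (∀ x ∈ Ω, gradient ut (gradient u x) = x)

/-- The coefficient matrix `s_ij(p) = (δ_ij + pᵢpⱼ/(1 - |p|²)) / √(1 - |p|²)` of the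
Lorentz mean curvature operator written in nondivergence form. -/
def sMat (n : ℕ) (p : EuclideanSpace ℝ (Fin n)) (i j : Fin n) : ℝ :=
  ((if i = j then (1 : ℝ) else 0) + p i * p j / (1 - ‖p‖ ^ 2)) / Real.sqrt (1 - ‖p‖ ^ 2)

/-- `Ω` has smooth boundary: it is the superlevel set of a smooth function whose
gradient does not vanish on the boundary. -/
def HasSmoothBoundary (n : ℕ) (Ω : Set (EuclideanSpace ℝ (Fin n))) : Prop :=
  ∃ g : EuclideanSpace ℝ (Fin n) → ℝ, ContDiff ℝ (⊤ : ℕ∞) g ∧ Ω = {p | 0 < g p} ∧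
    ∀ p ∈ frontier Ω, gradient g p ≠ 0

/-- `B(p) = Iₙ + p pᵀ / (v (1 + v))`, `v = √(1 - |p|²)`: the positive square root of the
inverse induced metric of a spacelike graph with gradient `p`. -/
def sqB (n : ℕ) (p : EuclideanSpace ℝ (Fin n)) : Matrix (Fin n) (Fin n) ℝ :=
  1 + (Real.sqrt (1 - ‖p‖ ^ 2) * (1 + Real.sqrt (1 - ‖p‖ ^ 2)))⁻¹ •
      Matrix.of fun i j => p i * p j

/-- `B'(p) = Iₙ - p pᵀ / (1 + v)`, `v = √(1 - |p|²)`: the square root of the induced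
metric of a spacelike graph with gradient `p`. -/
def sqBinv (n : ℕ) (p : EuclideanSpace ℝ (Fin n)) : Matrix (Fin n) (Fin n) ℝ :=
  1 - (1 + Real.sqrt (1 - ‖p‖ ^ 2))⁻¹ • Matrix.of fun i j => p i * p j


/-!
Since `D²u > 0` on the convex set `closure Ω`, the map `∇u` is injective there, so it sends the
boundary point `x` to a boundary point `y = ∇u x` of `Ω'`. By concavity of `h`, `Ω'` lies in the
half-space `{q | ⟪β, q - y⟫ > 0}` with `β = ∇h y`, so `z ↦ ⟪β, ∇u z⟫` attains its minimum over `Ω`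
at `x`. Hence the functional `ℓ d = ⟪β, D²u(x) d⟫` is nonnegative on every inward direction
`⟪ν, d⟫ > 0`, which forces `ℓ = ℓ(ν) ⟪ν, ·⟫` with `ℓ(ν) ≥ 0`. Evaluating at `β`,
`0 < ⟪β, D²u(x) β⟫ = ⟪ν, β⟫ ℓ(ν)`, so `⟪ν, β⟫ > 0`.
-/

open Set Filter Topology

section NormedSpace

variable {F : Type*} [NormedAddCommGroup F] [NormedSpace ℝ F]

theorem hasDerivAt_comp_add_smul {G : Type*} [NormedAddCommGroup G] [NormedSpace ℝ G]
    {f : F → G} {x v : F} {t : ℝ} (hf : DifferentiableAt ℝ f (x + t • v)) :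
    HasDerivAt (fun s : ℝ => f (x + s • v)) (fderiv ℝ f (x + t • v) v) t := by
  have hline : HasDerivAt (fun s : ℝ => x + s • v) v t := by
    simpa using ((hasDerivAt_id t).smul_const v).const_add x
  simpa [Function.comp_def] using hf.hasFDerivAt.comp_hasDerivAt t hline

theorem ConcaveOn.le_add_fderiv {f : F → ℝ} (hf : ConcaveOn ℝ univ f) {p : F}
    (hp : DifferentiableAt ℝ f p) (q : F) : f q ≤ f p + fderiv ℝ f p (q - p) := by
  have hline : (fun t : ℝ => f (p + t • (q - p))) = f ∘ AffineMap.lineMap p q := by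
    ext t; simp [AffineMap.lineMap_apply_module', add_comm]
  have hφ : ConcaveOn ℝ univ fun t : ℝ => f (p + t • (q - p)) := by
    rw [hline]; exact hf.comp_affineMap _
  have hφ' := hasDerivAt_comp_add_smul (t := 0) (v := q - p) (by simpa using hp)
  have := hφ.slope_le_of_hasDerivAt (mem_univ 0) (mem_univ 1) one_pos hφ'
  simp only [slope_def_field, zero_smul, add_zero, one_smul, add_sub_cancel] at this
  linarith

theorem mem_posTangentConeAt_setOf_pos {f : F → ℝ} {x d : F} (hf : DifferentiableAt ℝ f x)
    (hx : f x = 0) (hd : 0 < fderiv ℝ f x d) : d ∈ posTangentConeAt {p | 0 < f p} x := by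
  have hφ := hasDerivAt_comp_add_smul (t := 0) (v := d) (by simpa using hf)
  simp only [zero_smul, add_zero] at hφ
  have hslope : Tendsto (slope (fun t : ℝ => f (x + t • d)) 0) (𝓝[>] 0) (𝓝 (fderiv ℝ f x d)) :=
    (hasDerivWithinAt_iff_tendsto_slope' (lt_irrefl 0)).1 hφ.hasDerivWithinAt
  refine mem_posTangentConeAt_of_frequently_mem (Eventually.frequently ?_)
  filter_upwards [hslope.eventually (Ioi_mem_nhds hd), self_mem_nhdsWithin] with t hpos (ht : 0 < t)
  simpa [slope_def_field, hx, div_pos_iff, ht, ht.not_gt] using hpos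

end NormedSpace

section InnerProductSpace

variable {F : Type*} [NormedAddCommGroup F] [InnerProductSpace ℝ F]

theorem Convex.injOn_of_inner_fderiv_pos {T : F → F} {s : Set F} (hs : Convex ℝ s)
    (hT : ∀ p ∈ s, DifferentiableAt ℝ T p)
    (hpos : ∀ p ∈ s, ∀ ξ, ξ ≠ 0 → 0 < ⟪ξ, fderiv ℝ T p ξ⟫) : InjOn T s := by
  intro x hx z hz hTxz
  by_contra hne
  set v := z - x with hv
  have hseg : ∀ t ∈ Icc (0 : ℝ) 1, x + t • v ∈ s := fun t ht => hs.add_smul_sub_mem hx hz ht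
  have hψ : ∀ t ∈ Icc (0 : ℝ) 1,
      HasDerivAt (fun t : ℝ => ⟪v, T (x + t • v)⟫) ⟪v, fderiv ℝ T (x + t • v) v⟫ t :=
    fun t ht => (innerSL ℝ v).hasFDerivAt.comp_hasDerivAt t
      (hasDerivAt_comp_add_smul (hT _ (hseg t ht)))
  obtain ⟨c, hc, hslope⟩ := exists_hasDerivAt_eq_slope _ _ one_pos
    (fun t ht => (hψ t ht).continuousAt.continuousWithinAt)
    (fun t ht => hψ t (Ioo_subset_Icc_self ht))
  have hends : x + (1 : ℝ) • v = z := by rw [hv]; module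
  rw [hends, zero_smul, add_zero, hTxz, sub_self, zero_div] at hslope
  exact (hpos _ (hseg c (Ioo_subset_Icc_self hc)) v (sub_ne_zero.2 (Ne.symm hne))).ne' hslope

theorem eq_inner_mul_of_nonneg_on_halfspace (ℓ : F →L[ℝ] ℝ) {ν : F} (hν : ‖ν‖ = 1)
    (hℓ : ∀ d, 0 < ⟪ν, d⟫ → 0 ≤ ℓ d) : 0 ≤ ℓ ν ∧ ∀ d, ℓ d = ⟪ν, d⟫ * ℓ ν := by
  have hνν : ⟪ν, ν⟫ = 1 := by rw [real_inner_self_eq_norm_sq, hν, one_pow]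
  have hshift : ∀ w, ⟪ν, w⟫ = 0 → ∀ t : ℝ, 0 < t → 0 ≤ ℓ w + t * ℓ ν := fun w hw t ht => by
    simpa [inner_add_right, real_inner_smul_right, hw, hνν, hν, ht] using hℓ (w + t • ν)
  have hker : ∀ w, ⟪ν, w⟫ = 0 → ℓ w = 0 := by
    intro w hw
    have hlim : Tendsto (fun t : ℝ => t * ℓ ν) (𝓝[>] 0) (𝓝 0) := by
      simpa using ((continuous_mul_const (ℓ ν)).tendsto 0).mono_left nhdsWithin_le_nhds
    have hw' : ⟪ν, -w⟫ = 0 := by rw [inner_neg_right, hw, neg_zero]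
    have hup := ge_of_tendsto hlim (eventually_nhdsWithin_of_forall fun t ht =>
      (by linarith [hshift w hw t ht] : -ℓ w ≤ t * ℓ ν))
    have hdown := ge_of_tendsto hlim (eventually_nhdsWithin_of_forall fun t ht =>
      (by simpa [map_neg] using hshift (-w) hw' t ht : ℓ w ≤ t * ℓ ν))
    linarith
  refine ⟨hℓ ν (by rw [hνν]; exact one_pos), fun d => ?_⟩
  have hd : ⟪ν, d - ⟪ν, d⟫ • ν⟫ = 0 := by
    rw [inner_sub_right, real_inner_smul_right, hνν, mul_one, sub_self]
  have := hker _ hd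
  rw [map_sub, map_smul, smul_eq_mul] at this
  linarith

section Gradient

variable [CompleteSpace F] {f : F → ℝ}

theorem concaveOn_univ_of_inner_fderiv_gradient_nonpos (hf : Differentiable ℝ f)
    (hgf : Differentiable ℝ (gradient f))
    (hD2 : ∀ p ξ, ⟪ξ, fderiv ℝ (gradient f) p ξ⟫ ≤ 0) : ConcaveOn ℝ univ f := by
  refine ⟨convex_univ, fun x _ y _ a b ha hb hab => ?_⟩
  set v := y - x
  have hφ : ∀ t : ℝ, HasDerivAt (fun t : ℝ => f (x + t • v)) ⟪gradient f (x + t • v), v⟫ t :=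
    fun t => by simpa [inner_gradient_left] using hasDerivAt_comp_add_smul (hf (x + t • v))
  have hφ' : ∀ t : ℝ, HasDerivAt (fun t : ℝ => ⟪gradient f (x + t • v), v⟫)
      ⟪fderiv ℝ (gradient f) (x + t • v) v, v⟫ t := fun t =>
    (hasDerivAt_comp_add_smul (hgf (x + t • v))).inner ℝ (hasDerivAt_const t v) |>.congr_deriv
      (by simp)
  have hanti : Antitone (deriv fun t : ℝ => f (x + t • v)) := by
    rw [show (deriv fun t : ℝ => f (x + t • v)) = _ from funext fun t => (hφ t).deriv]
    refine antitone_of_deriv_nonpos (fun t => (hφ' t).differentiableAt) fun t => ?_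
    rw [(hφ' t).deriv, real_inner_comm]
    exact hD2 _ _
  have hcomb : x + (a • (0 : ℝ) + b • 1) • v = a • x + b • y := by
    rw [show a = 1 - b by linarith]; simp only [v]; module
  calc a • f x + b • f y = a • f (x + (0 : ℝ) • v) + b • f (x + (1 : ℝ) • v) := by simp [v]
    _ ≤ f (x + (a • (0 : ℝ) + b • 1) • v) :=
      (hanti.concaveOn_univ_of_deriv fun t => (hφ t).differentiableAt).2 (mem_univ 0)
        (mem_univ 1) ha hb hab
    _ = f (a • x + b • y) := by rw [hcomb]

theorem ContDiffOn.differentiableOn_gradient {U : Set F} (hU : IsOpen U)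
    (hf : ContDiffOn ℝ 2 f U) : DifferentiableOn ℝ (gradient f) U :=
  (InnerProductSpace.toDual ℝ F).symm.differentiable.comp_differentiableOn
    ((hf.fderiv_of_isOpen (m := 1) hU (by norm_num)).differentiableOn (by norm_num))

end Gradient

end InnerProductSpace

theorem Set.BijOn.mem_frontier_of_injOn_closure {X Y : Type*} [TopologicalSpace X]
    [TopologicalSpace Y] {T : X → Y} {s : Set X} {t : Set Y} {x : X} (hst : BijOn T s t)
    (hinj : InjOn T (closure s)) (hs : IsOpen s) (ht : IsOpen t) (hT : ContinuousWithinAt T s x)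
    (hx : x ∈ frontier s) : T x ∈ frontier t := by
  rw [hs.frontier_eq] at hx
  rw [ht.frontier_eq]
  refine ⟨closure_mono hst.mapsTo.image_subset (hT.mem_closure_image hx.1), fun hxt => ?_⟩
  obtain ⟨z, hz, hzx⟩ := hst.surjOn hxt
  exact hx.2 (hinj hx.1 (subset_closure hz) hzx.symm ▸ hz)

namespace IsUnifConvexDefFn

variable {n : ℕ} {Ω : Set (EuclideanSpace ℝ (Fin n))} {h : EuclideanSpace ℝ (Fin n) → ℝ}
  {θ : ℝ}

theorem differentiable (hh : IsUnifConvexDefFn n Ω h θ) : Differentiable ℝ h :=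
  hh.1.differentiable (by simp)

theorem differentiable_gradient (hh : IsUnifConvexDefFn n Ω h θ) :
    Differentiable ℝ (gradient h) := by
  rw [← differentiableOn_univ]
  exact ((hh.1.of_le (WithTop.coe_le_coe.2 le_top)).contDiffOn (s := univ)
    |>.differentiableOn_gradient isOpen_univ)

theorem concaveOn (hh : IsUnifConvexDefFn n Ω h θ) : ConcaveOn ℝ univ h :=
  concaveOn_univ_of_inner_fderiv_gradient_nonpos hh.differentiable hh.differentiable_gradient
    fun p ξ => (hh.2.2.2.2 p ξ).trans
      (mul_nonpos_of_nonpos_of_nonneg (neg_nonpos.2 hh.2.2.2.1.le) (sq_nonneg _))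

theorem le_add_inner_gradient (hh : IsUnifConvexDefFn n Ω h θ) (p q : EuclideanSpace ℝ (Fin n)) :
    h q ≤ h p + ⟪gradient h p, q - p⟫ := by
  rw [inner_gradient_left]
  exact hh.concaveOn.le_add_fderiv (hh.differentiable p) q

theorem isOpen (hh : IsUnifConvexDefFn n Ω h θ) : IsOpen Ω := by
  rw [hh.2.1]
  exact isOpen_lt continuous_const hh.differentiable.continuous

theorem convex (hh : IsUnifConvexDefFn n Ω h θ) : Convex ℝ Ω := by
  simpa [hh.2.1] using hh.concaveOn.convex_gt 0

theorem eq_zero_of_mem_frontier (hh : IsUnifConvexDefFn n Ω h θ)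
    {p : EuclideanSpace ℝ (Fin n)} (hp : p ∈ frontier Ω) : h p = 0 := by
  rw [hh.2.1] at hp
  exact (frontier_lt_subset_eq continuous_const hh.differentiable.continuous hp).symm

theorem mem_posTangentConeAt (hh : IsUnifConvexDefFn n Ω h θ) {p d : EuclideanSpace ℝ (Fin n)}
    (hp : p ∈ frontier Ω) (hd : 0 < ⟪gradient h p, d⟫) : d ∈ posTangentConeAt Ω p := by
  rw [inner_gradient_left] at hd
  rw [hh.2.1]
  exact mem_posTangentConeAt_setOf_pos (hh.differentiable p) (hh.eq_zero_of_mem_frontier hp) hd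

theorem inner_gradient_sub_pos (hh : IsUnifConvexDefFn n Ω h θ) {p q : EuclideanSpace ℝ (Fin n)}
    (hp : p ∈ frontier Ω) (hq : q ∈ Ω) : 0 < ⟪gradient h p, q - p⟫ := by
  have hq' : 0 < h q := (hh.2.1 ▸ hq : q ∈ {p | 0 < h p})
  linarith [hh.le_add_inner_gradient p q, hh.eq_zero_of_mem_frontier hp]

end IsUnifConvexDefFn

theorem IsSol.differentiableAt_gradient {n : ℕ} {Ω Ω' : Set (EuclideanSpace ℝ (Fin n))}
    {u : EuclideanSpace ℝ (Fin n) → ℝ} {c : ℝ} (hu : IsSol n Ω Ω' u c)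
    {p : EuclideanSpace ℝ (Fin n)} (hp : p ∈ closure Ω) : DifferentiableAt ℝ (gradient u) p := by
  obtain ⟨⟨U, hU, hΩU, huU⟩, -⟩ := hu
  exact ((huU.of_le (WithTop.coe_le_coe.2 le_top)).differentiableOn_gradient hU).differentiableAt
    (hU.mem_nhds (hΩU hp))

theorem statement9_general (n : ℕ) (Ω Ω' : Set (EuclideanSpace ℝ (Fin n)))
    (g h : EuclideanSpace ℝ (Fin n) → ℝ) (θ₁ θ₂ : ℝ)
    (hΩ : IsUnifConvexDefFn n Ω g θ₁) (hΩ' : IsUnifConvexDefFn n Ω' h θ₂)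
    (u : EuclideanSpace ℝ (Fin n) → ℝ) (c : ℝ) (hu : IsSol n Ω Ω' u c) :
    ∀ x ∈ frontier Ω, 0 ≤ ⟪gradient h (gradient u x), gradient g x⟫ := by
  have hD2u := hu.2.2.1
  have hbij := hu.2.2.2.1
  intro x hx
  have hxΩ : x ∈ closure Ω := frontier_subset_closure hx
  have hinj : InjOn (gradient u) (closure Ω) :=
    hΩ.convex.closure.injOn_of_inner_fderiv_pos (fun _ => hu.differentiableAt_gradient) hD2u
  have hy : gradient u x ∈ frontier Ω' :=
    hbij.mem_frontier_of_injOn_closure hinj hΩ.isOpen hΩ'.isOpen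
      (hu.differentiableAt_gradient hxΩ).continuousAt.continuousWithinAt hx
  set β := gradient h (gradient u x)
  have hmin : IsMinOn (fun z => ⟪β, gradient u z⟫) Ω x := fun z hz => by
    have := hΩ'.inner_gradient_sub_pos hy (hbij.mapsTo hz)
    rw [inner_sub_right] at this
    exact (sub_pos.1 this).le
  set ℓ := (innerSL ℝ β).comp (fderiv ℝ (gradient u) x)
  have hℓ : ∀ d, 0 < ⟪gradient g x, d⟫ → 0 ≤ ℓ d := fun d hd =>
    hmin.localize.hasFDerivWithinAt_nonneg
      ((innerSL ℝ β).hasFDerivAt.comp x (hu.differentiableAt_gradient hxΩ).hasFDerivAt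
        |>.hasFDerivWithinAt) (hΩ.mem_posTangentConeAt hx hd)
  obtain ⟨hℓν, hℓ_eq⟩ := eq_inner_mul_of_nonneg_on_halfspace ℓ (hΩ.2.2.1 x hx) hℓ
  rcases eq_or_ne β 0 with hβ | hβ
  · simp [hβ]
  have hℓβ : 0 < ⟪gradient g x, β⟫ * ℓ (gradient g x) := hℓ_eq β ▸ hD2u x hxΩ β hβ
  rw [real_inner_comm]
  exact (pos_of_mul_pos_left hℓβ hℓν).le

/-- Lemma 3.5, obliqueness.  For a strictly convex solution of the second
boundary value problem, `⟨β(x), ν(x)⟩ = ⟨∇h(∇u(x)), ∇h̃(x)⟩ ≥ 0` on `∂Ω`. -/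
theorem statement9 (n : ℕ) (hn : 2 ≤ n) (Ω Ω' : Set (EuclideanSpace ℝ (Fin n)))
    (g h : EuclideanSpace ℝ (Fin n) → ℝ) (θ₁ θ₂ : ℝ)
    (hΩb : Bornology.IsBounded Ω) (hΩ'b : Bornology.IsBounded Ω')
    (hΩ : IsUnifConvexDefFn n Ω g θ₁) (hΩ' : IsUnifConvexDefFn n Ω' h θ₂)
    (hsub : closure Ω' ⊆ Metric.ball (0 : EuclideanSpace ℝ (Fin n)) 1)
    (u : EuclideanSpace ℝ (Fin n) → ℝ) (c : ℝ) (hu : IsSol n Ω Ω' u c) :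
    ∀ x ∈ frontier Ω, 0 ≤ ⟪gradient h (gradient u x), gradient g x⟫ :=
  statement9_general n Ω Ω' g h θ₁ θ₂ hΩ hΩ' u c hu
end
end

section
/- Let n ≥ 1, R₀ > 0 and t₀ ∈ (0, 1), and set c = n t₀/(√(1 − t₀²) R₀). Define u : ℝⁿ → ℝ by u(x) = (√(n² + c²|x|²) − n)/c. Then u is smooth, its gradient is ∇u(x) = c x/√(n² + c²|x|²) with |∇u(x)| < 1 for all x, the gradient map ∇u is a bijection (diffeomorphism) from the open ball B(0, R₀) onto the open ball B(0, t₀), and u satisfies the constant mean curvature equation ∑_{i=1}^n ∂_i(∂_i u/√(1 − |∇u|²))(x) = c for all x ∈ B(0, R₀). In particular, the second boundary value problem div(Du/√(1 − |Du|²)) = c in B(0, R₀) with Du(B(0, R₀)) = B(0, t₀) has a radially symmetric strictly convex solution. -/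
noncomputable section
open MeasureTheory
open scoped RealInnerProductSpace

/-!
`u` is a hyperboloid, the standard spacelike hypersurface of constant mean curvature. With
`Q = n² + c²|x|²` one has `∇u = c x / √Q` and `1 - |∇u|² = n² / Q`, so the Lorentz flux
`∇u / √(1 - |∇u|²)` is the linear field `(c / n) x`, of divergence `c`. The gradient map is
inverted by `p ↦ n p / (c √(1 - |p|²))`, and `|∇u x| = c|x| / √(n² + c²|x|²)` increases strictly
with `|x|`; the value of `c` is the one for which it equals `t₀` at `|x| = R₀`.
-/

section Hyperboloid

variable {E : Type*} [NormedAddCommGroup E] [InnerProductSpace ℝ E] {a b : ℝ}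

def hyperboloidGrad (a b : ℝ) (x : E) : E := (b / √(a ^ 2 + b ^ 2 * ‖x‖ ^ 2)) • x

def hyperboloidSlope (a b r : ℝ) : ℝ := b * r / √(a ^ 2 + b ^ 2 * r ^ 2)

lemma sq_add_mul_sq_pos (ha : a ≠ 0) (r : ℝ) : 0 < a ^ 2 + b ^ 2 * r ^ 2 := by
  positivity

lemma contDiff_hyperboloid (ha : a ≠ 0) :
    ContDiff ℝ (⊤ : ℕ∞) (fun x : E => (√(a ^ 2 + b ^ 2 * ‖x‖ ^ 2) - a) / b) :=
  (((contDiff_const.add (contDiff_const.mul (contDiff_norm_sq ℝ))).sqrt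
    fun x => (sq_add_mul_sq_pos ha ‖x‖).ne').sub contDiff_const).div_const b

lemma hasGradientAt_hyperboloid [CompleteSpace E] (ha : a ≠ 0) (x : E) :
    HasGradientAt (fun x : E => (√(a ^ 2 + b ^ 2 * ‖x‖ ^ 2) - a) / b)
      (hyperboloidGrad a b x) x := by
  have hQ := sq_add_mul_sq_pos (b := b) ha ‖x‖
  have hprofile : HasDerivAt (fun s : ℝ => (√(a ^ 2 + b ^ 2 * s) - a) / b)
      (b / (2 * √(a ^ 2 + b ^ 2 * ‖x‖ ^ 2))) (‖x‖ ^ 2) := by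
    have hinner : HasDerivAt (fun s : ℝ => a ^ 2 + b ^ 2 * s) (b ^ 2) (‖x‖ ^ 2) := by
      simpa using ((hasDerivAt_id (‖x‖ ^ 2)).const_mul (b ^ 2)).const_add (a ^ 2)
    refine ((((Real.hasDerivAt_sqrt hQ.ne').comp (‖x‖ ^ 2) hinner).sub_const a).div_const
      b).congr_deriv ?_
    field_simp
  rw [hasGradientAt_iff_hasFDerivAt]
  refine (hprofile.comp_hasFDerivAt x (hasStrictFDerivAt_norm_sq x).hasFDerivAt).congr_fderiv ?_
  ext y
  simp only [hyperboloidGrad, InnerProductSpace.toDual_apply_apply, smul_apply,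
    innerSL_apply_apply, smul_eq_mul, real_inner_smul_left]
  field_simp
  ring

lemma norm_hyperboloidGrad (hb : 0 ≤ b) (x : E) :
    ‖hyperboloidGrad a b x‖ = hyperboloidSlope a b ‖x‖ := by
  rw [hyperboloidGrad, hyperboloidSlope, norm_smul, Real.norm_of_nonneg (by positivity)]
  ring

lemma one_sub_norm_hyperboloidGrad_sq (ha : a ≠ 0) (x : E) :
    1 - ‖hyperboloidGrad a b x‖ ^ 2 = a ^ 2 / (a ^ 2 + b ^ 2 * ‖x‖ ^ 2) := by
  have hQ := sq_add_mul_sq_pos (b := b) ha ‖x‖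
  rw [hyperboloidGrad, norm_smul, mul_pow, norm_div, Real.norm_eq_abs, Real.norm_of_nonneg
    (Real.sqrt_nonneg _), div_pow, sq_abs, Real.sq_sqrt hQ.le]
  field_simp
  ring

lemma norm_hyperboloidGrad_lt_one (ha : a ≠ 0) (x : E) : ‖hyperboloidGrad a b x‖ < 1 := by
  have h := one_sub_norm_hyperboloidGrad_sq (b := b) ha x
  have : 0 < 1 - ‖hyperboloidGrad a b x‖ ^ 2 :=
    h ▸ div_pos (by positivity) (sq_add_mul_sq_pos ha _)
  nlinarith [norm_nonneg (hyperboloidGrad a b x)]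

lemma inv_sqrt_smul_hyperboloidGrad (ha : 0 < a) (x : E) :
    (√(1 - ‖hyperboloidGrad a b x‖ ^ 2))⁻¹ • hyperboloidGrad a b x = (b / a) • x := by
  have hQ := Real.sqrt_pos.2 (sq_add_mul_sq_pos (b := b) ha.ne' ‖x‖)
  rw [one_sub_norm_hyperboloidGrad_sq ha.ne', Real.sqrt_div (sq_nonneg a), Real.sqrt_sq ha.le,
    hyperboloidGrad, smul_smul]
  congr 1
  field_simp

lemma hyperboloidGrad_injective (ha : 0 < a) (hb : b ≠ 0) :
    Function.Injective (hyperboloidGrad (E := E) a b) := by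
  intro x y hxy
  have h := inv_sqrt_smul_hyperboloidGrad (b := b) ha x
  rw [hxy, inv_sqrt_smul_hyperboloidGrad ha] at h
  exact (smul_right_injective E (div_ne_zero hb ha.ne')) h.symm

lemma hyperboloidGrad_inverse (ha : 0 < a) (hb : b ≠ 0) {p : E} (hp : ‖p‖ < 1) :
    hyperboloidGrad a b ((a / (b * √(1 - ‖p‖ ^ 2))) • p) = p := by
  have h1p : 0 < 1 - ‖p‖ ^ 2 := by nlinarith [norm_nonneg p]
  have hs := Real.sqrt_pos.2 h1p
  have hQ :
      a ^ 2 + b ^ 2 * ‖(a / (b * √(1 - ‖p‖ ^ 2))) • p‖ ^ 2 = (a / √(1 - ‖p‖ ^ 2)) ^ 2 := by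
    rw [norm_smul, mul_pow, Real.norm_eq_abs, sq_abs, div_pow, div_pow, mul_pow,
      Real.sq_sqrt h1p.le]
    field_simp
    ring
  rw [hyperboloidGrad, hQ, Real.sqrt_sq (by positivity), smul_smul]
  convert one_smul ℝ p
  field_simp

lemma hyperboloidSlope_lt_hyperboloidSlope_iff (ha : a ≠ 0) (hb : 0 < b) {r s : ℝ}
    (hr : 0 ≤ r) (hs : 0 ≤ s) : hyperboloidSlope a b r < hyperboloidSlope a b s ↔ r < s := by
  have hQr := sq_add_mul_sq_pos (b := b) ha r
  have hQs := sq_add_mul_sq_pos (b := b) ha s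
  unfold hyperboloidSlope
  rw [← pow_lt_pow_iff_left₀ (by positivity) (by positivity) two_ne_zero, div_pow, div_pow,
    Real.sq_sqrt hQr.le, Real.sq_sqrt hQs.le, div_lt_div_iff₀ hQr hQs,
    ← pow_lt_pow_iff_left₀ hr hs two_ne_zero]
  have hab : 0 < a ^ 2 * b ^ 2 := by positivity
  constructor <;> intro h <;> nlinarith

lemma hyperboloidSlope_lt_one (ha : a ≠ 0) (r : ℝ) : hyperboloidSlope a b r < 1 := by
  have hQ := sq_add_mul_sq_pos (b := b) ha r
  rw [hyperboloidSlope, div_lt_one (Real.sqrt_pos.2 hQ)]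
  exact Real.lt_sqrt_of_sq_lt (by nlinarith [sq_pos_of_ne_zero ha])

lemma bijOn_hyperboloidGrad_ball (ha : 0 < a) (hb : 0 < b) {R : ℝ} (hR : 0 ≤ R) :
    Set.BijOn (hyperboloidGrad a b) (Metric.ball (0 : E) R)
      (Metric.ball (0 : E) (hyperboloidSlope a b R)) := by
  refine ⟨fun x hx => ?_, (hyperboloidGrad_injective ha hb.ne').injOn, fun p hp => ?_⟩
  · rw [Metric.mem_ball, dist_zero_right] at hx ⊢
    rwa [norm_hyperboloidGrad hb.le, hyperboloidSlope_lt_hyperboloidSlope_iff ha.ne' hb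
      (norm_nonneg x) hR]
  · rw [Metric.mem_ball, dist_zero_right] at hp
    have hp1 : ‖p‖ < 1 := hp.trans (hyperboloidSlope_lt_one ha.ne' R)
    refine ⟨_, ?_, hyperboloidGrad_inverse ha hb.ne' hp1⟩
    rw [Metric.mem_ball, dist_zero_right,
      ← hyperboloidSlope_lt_hyperboloidSlope_iff ha.ne' hb (norm_nonneg _) hR,
      ← norm_hyperboloidGrad hb.le, hyperboloidGrad_inverse ha hb.ne' hp1]
    exact hp

end Hyperboloid

lemma fderiv_apply_ev (n : ℕ) (u : EuclideanSpace ℝ (Fin n) → ℝ) (y : EuclideanSpace ℝ (Fin n))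
    (i : Fin n) : fderiv ℝ u y (ev n i) = gradient u y i := by
  rw [gradient, ← InnerProductSpace.toDual_symm_apply, ev, EuclideanSpace.inner_single_right]
  simp

lemma MOp_eq_of_flux_eq_smul (n : ℕ) (u : EuclideanSpace ℝ (Fin n) → ℝ) (κ : ℝ)
    (hflux : ∀ y, (√(1 - ‖gradient u y‖ ^ 2))⁻¹ • gradient u y = κ • y)
    (x : EuclideanSpace ℝ (Fin n)) : MOp n u x = n * κ := by
  have hcoord : ∀ i : Fin n, (fun y => fderiv ℝ u y (ev n i) / √(1 - ‖gradient u y‖ ^ 2)) =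
      fun y => κ * y i := by
    intro i
    funext y
    rw [fderiv_apply_ev, div_eq_inv_mul, ← smul_eq_mul, ← PiLp.smul_apply, hflux,
      PiLp.smul_apply, smul_eq_mul]
  have hderiv :
      ∀ i : Fin n, fderiv ℝ (fun y : EuclideanSpace ℝ (Fin n) => κ * y i) x (ev n i) = κ := by
    intro i
    have h : HasFDerivAt (fun y : EuclideanSpace ℝ (Fin n) => κ * y i)
        (κ • (EuclideanSpace.proj i : EuclideanSpace ℝ (Fin n) →L[ℝ] ℝ)) x :=
      (EuclideanSpace.proj i : EuclideanSpace ℝ (Fin n) →L[ℝ] ℝ).hasFDerivAt.const_mul κ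
    rw [h.fderiv]
    simp [ev]
  simp only [MOp, hcoord, hderiv, Finset.sum_const, Finset.card_univ, Fintype.card_fin,
    nsmul_eq_mul]

lemma hyperboloidSlope_eq {a R t : ℝ} (ha : 0 < a) (hR : R ≠ 0) (ht : t ^ 2 < 1) :
    hyperboloidSlope a (a * t / (√(1 - t ^ 2) * R)) R = t := by
  have h1t : 0 < 1 - t ^ 2 := by linarith
  have hs := Real.sqrt_pos.2 h1t
  have hQ : a ^ 2 + (a * t / (√(1 - t ^ 2) * R)) ^ 2 * R ^ 2 = (a / √(1 - t ^ 2)) ^ 2 := by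
    rw [div_pow, div_pow, mul_pow, mul_pow, Real.sq_sqrt h1t.le]
    field_simp
    ring
  rw [hyperboloidSlope, hQ, Real.sqrt_sq (by positivity)]
  field_simp

/-- Lemma 6.1.  The explicit radially symmetric solution of the second
boundary value problem for the constant Lorentz mean curvature equation on balls. -/
theorem statement18 (n : ℕ) (hn : 1 ≤ n) (R₀ t₀ : ℝ) (hR : 0 < R₀)
    (ht : t₀ ∈ Set.Ioo (0 : ℝ) 1)
    (c : ℝ) (hc : c = (n : ℝ) * t₀ / (Real.sqrt (1 - t₀ ^ 2) * R₀))
    (u : EuclideanSpace ℝ (Fin n) → ℝ)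
    (hu : ∀ x, u x = (Real.sqrt ((n : ℝ) ^ 2 + c ^ 2 * ‖x‖ ^ 2) - (n : ℝ)) / c) :
    ContDiff ℝ (⊤ : ℕ∞) u ∧
    (∀ x, gradient u x = (c / Real.sqrt ((n : ℝ) ^ 2 + c ^ 2 * ‖x‖ ^ 2)) • x) ∧
    (∀ x, ‖gradient u x‖ < 1) ∧
    Set.BijOn (gradient u) (Metric.ball (0 : EuclideanSpace ℝ (Fin n)) R₀)
      (Metric.ball (0 : EuclideanSpace ℝ (Fin n)) t₀) ∧
    (∀ x ∈ Metric.ball (0 : EuclideanSpace ℝ (Fin n)) R₀, MOp n u x = c) := by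
  have hn0 : (0 : ℝ) < n := by exact_mod_cast hn
  have ht₀ : t₀ ^ 2 < 1 := by nlinarith [ht.1, ht.2]
  have hc0 : 0 < c := by
    rw [hc]
    exact div_pos (mul_pos hn0 ht.1) (mul_pos (Real.sqrt_pos.2 (by linarith)) hR)
  obtain rfl : u = fun x => (√((n : ℝ) ^ 2 + c ^ 2 * ‖x‖ ^ 2) - n) / c := funext hu
  have hgrad : gradient _ = hyperboloidGrad (n : ℝ) c :=
    funext fun x => (hasGradientAt_hyperboloid (E := EuclideanSpace ℝ (Fin n)) hn0.ne' x).gradient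
  refine ⟨contDiff_hyperboloid hn0.ne', fun x => congrFun hgrad x,
    fun x => hgrad ▸ norm_hyperboloidGrad_lt_one hn0.ne' x, ?_, fun x _ => ?_⟩
  · have hslope : hyperboloidSlope n c R₀ = t₀ := hc ▸ hyperboloidSlope_eq hn0 hR.ne' ht₀
    rw [hgrad, ← hslope]
    exact bijOn_hyperboloidGrad_ball hn0 hc0 hR.le
  · rw [MOp_eq_of_flux_eq_smul n _ (c / n) (hgrad ▸ inv_sqrt_smul_hyperboloidGrad hn0)]
    field_simp
end
end
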